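/- For every pair of sets F and G, the class of linearly ordered sets equipped with an F-indexed family of order automorphisms and a G-indexed family of order antiautomorphisms, all having a common center (common fixed point), has the strong amalgamation property: whenever A, B, C are such structures and i_A : C → A, i_B : C → B are order embeddings commuting with each indexed operation, there exist such a structure D and order embeddings j_A : A → D, j_B : B → D commuting with each indexed operation, such that j_A ∘ i_A = j_B ∘ i_B and range(j_A) ∩ range(j_B) = range(j_A ∘ i_A). -/

import Mathlib

/-- A linearly ordered set equipped with an `F`-indexed family of order
automorphisms and a `G`-indexed family of order antiautomorphisms, all having a
common center (common fixed point). -/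
structure LinOrderAutAntiCenter (F G : Type) where
  carrier : Type
  [linOrd : LinearOrder carrier]
  center : carrier
  f : F → carrier → carrier
  g : G → carrier → carrier
  bijF : ∀ i, Function.Bijective (f i)
  ordF : ∀ i (a b : carrier), a ≤ b ↔ f i a ≤ f i b
  bijG : ∀ j, Function.Bijective (g j)
  ordG : ∀ j (a b : carrier), a ≤ b ↔ g j b ≤ g j a
  centerF : ∀ i, f i center = center
  centerG : ∀ j, g j center = center

attribute [instance] LinOrderAutAntiCenter.linOrd

/-!
The amalgam is `A ⊔ (B ∖ iB C)`, the copy of `C` in `B` being identified with the one in `A`.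
An element `a` of `A` and an element `b` of `B` outside `iB C` are compared through `C` when
some `c` separates them. Otherwise they lie in the same gap of `C`, and there `a` is put below
`b` exactly when the gap lies below the center. Automorphisms fix the center, so they map each
gap to a gap on the same side and preserve this rule; antiautomorphisms swap the two sides,
which is exactly what makes them reverse the order between `a` and `b`.
-/

open Function Set

section

variable {α β : Type*} [LinearOrder α] [LinearOrder β]

def Glued (_R : α → β → Prop) : Type _ := α ⊕ β

namespace Glued

variable {R : α → β → Prop}

protected def Le : Glued R → Glued R → Prop
  | .inl a, .inl a' => a ≤ a'
  | .inl a, .inr b => R a b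
  | .inr b, .inl a => ¬ R a b
  | .inr b, .inr b' => b ≤ b'

protected noncomputable abbrev linearOrder (hα : ∀ b, Antitone (R · b))
    (hβ : ∀ a, Monotone (R a)) : LinearOrder (Glued R) where
  le := Glued.Le
  le_refl := by rintro (a | b) <;> exact le_rfl
  le_trans := by
    rintro (a | b) (a' | b') (a'' | b'') h₁ h₂
    · exact h₁.trans h₂
    · exact hα _ h₁ h₂
    · exact not_lt.1 fun h => h₂ (hα _ h.le h₁)
    · exact hβ _ h₂ h₁
    · exact fun h => h₁ (hα _ h₂ h)
    · exact not_lt.1 fun h => h₁ (hβ _ h.le h₂)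
    · exact fun h => h₂ (hβ _ h₁ h)
    · exact h₁.trans h₂
  le_antisymm := by
    rintro (a | b) (a' | b') h₁ h₂
    · exact congrArg Sum.inl (le_antisymm h₁ h₂)
    · exact absurd h₁ h₂
    · exact absurd h₂ h₁
    · exact congrArg Sum.inr (le_antisymm h₁ h₂)
  le_total := by
    rintro (a | b) (a' | b')
    · exact le_total a a'
    · exact em _
    · exact (em _).symm
    · exact le_total b b'
  toDecidableLE := Classical.decRel _

theorem le_iff_map_le_map {σ : α → α} {τ : β → β}
    (hσ : ∀ a a', a ≤ a' ↔ σ a ≤ σ a') (hτ : ∀ b b', b ≤ b' ↔ τ b ≤ τ b')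
    (hR : ∀ a b, R (σ a) (τ b) ↔ R a b) (x y : Glued R) :
    Glued.Le x y ↔ Glued.Le (R := R) (Sum.map σ τ x) (Sum.map σ τ y) := by
  rcases x with a | b <;> rcases y with a' | b'
  exacts [hσ a a', (hR a b').symm, not_congr (hR a' b).symm, hτ b b']

theorem le_iff_map_le_map_of_anti {σ : α → α} {τ : β → β}
    (hσ : ∀ a a', a ≤ a' ↔ σ a' ≤ σ a) (hτ : ∀ b b', b ≤ b' ↔ τ b' ≤ τ b)
    (hR : ∀ a b, R (σ a) (τ b) ↔ ¬ R a b) (x y : Glued R) :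
    Glued.Le x y ↔ Glued.Le (R := R) (Sum.map σ τ y) (Sum.map σ τ x) := by
  rcases x with a | b <;> rcases y with a' | b'
  exacts [hσ a a', ((not_congr (hR a b')).trans not_not).symm, (hR a' b).symm, hτ b b']

end Glued

end

section

variable {α β γ : Type*} [LinearOrder α] [LinearOrder β] [LinearOrder γ]
  {iA : γ ↪o α} {iB : γ ↪o β}

variable (iA iB) in
def SepLE (a : α) (b : β) : Prop := ∃ c, a ≤ iA c ∧ iB c ≤ b

theorem sepLE_antitone_left (b : β) : Antitone (SepLE iA iB · b) :=
  fun _ _ h ⟨c, hac, hcb⟩ => ⟨c, h.trans hac, hcb⟩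

theorem sepLE_monotone_right (a : α) : Monotone (SepLE iA iB a) :=
  fun _ _ h ⟨c, hac, hcb⟩ => ⟨c, hac, hcb.trans h⟩

theorem not_sepLE_and_sepLE {a : α} {b : β} (hb : b ∉ range iB) :
    ¬ (SepLE iA iB a b ∧ SepLE iB iA b a) := by
  rintro ⟨⟨c, hac, hcb⟩, ⟨c', hbc', hc'a⟩⟩
  have hc'c : iB c' ≤ iB c := iB.le_iff_le.2 (iA.le_iff_le.1 (hc'a.trans hac))
  exact hb ⟨c', le_antisymm (hc'c.trans hcb) hbc'⟩

theorem sepLE_or_sepLE (c : γ) (b : β) : SepLE iA iB (iA c) b ∨ SepLE iB iA b (iA c) :=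
  (le_total (iB c) b).imp (fun h => ⟨c, le_rfl, h⟩) (fun h => ⟨c, h, le_rfl⟩)

theorem sepLE_map_iff {σ : α → α} {τ : β → β} {ρ : γ → γ} (hρ : Surjective ρ)
    (hσ : ∀ a a', a ≤ a' ↔ σ a ≤ σ a') (hτ : ∀ b b', b ≤ b' ↔ τ b ≤ τ b')
    (hA : ∀ c, iA (ρ c) = σ (iA c)) (hB : ∀ c, iB (ρ c) = τ (iB c)) (a : α) (b : β) :
    SepLE iA iB (σ a) (τ b) ↔ SepLE iA iB a b := by
  rw [SepLE, SepLE, hρ.exists]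
  simp only [hA, hB, ← hσ, ← hτ]

theorem sepLE_map_iff_of_anti {σ : α → α} {τ : β → β} {ρ : γ → γ} (hρ : Surjective ρ)
    (hσ : ∀ a a', a ≤ a' ↔ σ a' ≤ σ a) (hτ : ∀ b b', b ≤ b' ↔ τ b' ≤ τ b)
    (hA : ∀ c, iA (ρ c) = σ (iA c)) (hB : ∀ c, iB (ρ c) = τ (iB c)) (a : α) (b : β) :
    SepLE iA iB (σ a) (τ b) ↔ SepLE iB iA b a := by
  rw [SepLE, SepLE, hρ.exists]
  simp only [hA, hB, ← hσ, ← hτ, and_comm]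

variable (iA iB) in
/-- `a ≤ b` in the amalgam; the second disjunct is the tie-break inside a gap of `γ`. -/
def MixedLE (z : γ) (a : α) (b : β) : Prop := SepLE iA iB a b ∨ ¬ SepLE iB iA b a ∧ a < iA z

variable {z : γ}

theorem mixedLE_antitone_left (b : β) : Antitone (MixedLE iA iB z · b) :=
  fun _ _ h => Or.imp (sepLE_antitone_left b h)
    (And.imp (mt (sepLE_monotone_right b h)) (lt_of_le_of_lt h))

theorem mixedLE_monotone_right (a : α) : Monotone (MixedLE iA iB z a) :=
  fun _ _ h => Or.imp (sepLE_monotone_right a h) (And.imp_left (mt (sepLE_antitone_left a h)))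

theorem mixedLE_apply_left_iff (c : γ) (b : β) : MixedLE iA iB z (iA c) b ↔ iB c ≤ b := by
  refine ⟨?_, fun h => Or.inl ⟨c, le_rfl, h⟩⟩
  rintro (⟨c', hcc', hc'b⟩ | ⟨hsep, -⟩)
  · exact (iB.le_iff_le.2 (iA.le_iff_le.1 hcc')).trans hc'b
  · exact (le_total (iB c) b).resolve_right fun h => hsep ⟨c, h, le_rfl⟩

theorem mixedLE_map_iff {σ : α → α} {τ : β → β} {ρ : γ → γ} (hρ : Surjective ρ)
    (hσ : ∀ a a', a ≤ a' ↔ σ a ≤ σ a') (hτ : ∀ b b', b ≤ b' ↔ τ b ≤ τ b')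
    (hA : ∀ c, iA (ρ c) = σ (iA c)) (hB : ∀ c, iB (ρ c) = τ (iB c)) (hz : ρ z = z)
    (a : α) (b : β) : MixedLE iA iB z (σ a) (τ b) ↔ MixedLE iA iB z a b := by
  have hσz : σ (iA z) = iA z := by rw [← hA, hz]
  have hlt : σ a < iA z ↔ a < iA z := by
    rw [lt_iff_not_ge, lt_iff_not_ge, hσ (iA z) a, hσz]
  rw [MixedLE, MixedLE, sepLE_map_iff hρ hσ hτ hA hB, sepLE_map_iff hρ hτ hσ hB hA, hlt]

theorem mixedLE_map_iff_not_of_anti {σ : α → α} {τ : β → β} {ρ : γ → γ}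
    (hρ : Surjective ρ) (hσ : ∀ a a', a ≤ a' ↔ σ a' ≤ σ a) (hτ : ∀ b b', b ≤ b' ↔ τ b' ≤ τ b)
    (hA : ∀ c, iA (ρ c) = σ (iA c)) (hB : ∀ c, iB (ρ c) = τ (iB c)) (hz : ρ z = z)
    (a : α) {b : β} (hb : b ∉ range iB) :
    MixedLE iA iB z (σ a) (τ b) ↔ ¬ MixedLE iA iB z a b := by
  have hσz : σ (iA z) = iA z := by rw [← hA, hz]
  have hlt : σ a < iA z ↔ iA z < a := by
    rw [lt_iff_not_ge, lt_iff_not_ge, hσ a (iA z), hσz]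
  rw [MixedLE, MixedLE, sepLE_map_iff_of_anti hρ hσ hτ hA hB,
    sepLE_map_iff_of_anti hρ hτ hσ hB hA, hlt]
  have hdisj : ¬ (SepLE iA iB a b ∧ SepLE iB iA b a) := not_sepLE_and_sepLE hb
  rcases lt_trichotomy a (iA z) with h | rfl | h
  · simp only [h, h.not_gt]
    tauto
  · have : SepLE iA iB (iA z) b ∨ SepLE iB iA b (iA z) := sepLE_or_sepLE z b
    simp only [lt_irrefl]
    tauto
  · simp only [h, h.not_gt]
    tauto

theorem apply_mem_range_iff {τ : β → β} {ρ : γ → γ} (hρ : Surjective ρ) (hτ : Injective τ)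
    (hB : ∀ c, iB (ρ c) = τ (iB c)) (b : β) : τ b ∈ range iB ↔ b ∈ range iB := by
  constructor
  · rintro ⟨c, hc⟩
    obtain ⟨c, rfl⟩ := hρ c
    exact ⟨c, hτ (by rw [← hB, hc])⟩
  · rintro ⟨c, rfl⟩
    exact ⟨ρ c, hB c⟩

variable (iA iB z) in
def Amalgam : Type _ := Glued fun a (b : {b // b ∉ range iB}) => MixedLE iA iB z a b

noncomputable instance : LinearOrder (Amalgam iA iB z) :=
  Glued.linearOrder (fun b => mixedLE_antitone_left b.1) (fun a _ _ h => mixedLE_monotone_right a h)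

namespace Amalgam

variable (iA iB z) in
noncomputable def left : α ↪o Amalgam iA iB z :=
  OrderEmbedding.ofMapLEIff Sum.inl fun _ _ => Iff.rfl

variable (iA iB z) in
open Classical in
noncomputable def rightFun (b : β) : Amalgam iA iB z :=
  if h : b ∈ range iB then left iA iB z (iA h.choose) else Sum.inr ⟨b, h⟩

theorem rightFun_apply_iB (c : γ) : rightFun iA iB z (iB c) = left iA iB z (iA c) :=
  have h : iB c ∈ range iB := mem_range_self c
  (dif_pos h).trans (congrArg _ (congrArg iA (iB.injective h.choose_spec)))

theorem rightFun_of_notMem {b : β} (hb : b ∉ range iB) :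
    rightFun iA iB z b = Sum.inr ⟨b, hb⟩ :=
  dif_neg hb

theorem rightFun_le_rightFun_iff (b b' : β) :
    rightFun iA iB z b ≤ rightFun iA iB z b' ↔ b ≤ b' := by
  rcases em (b ∈ range iB) with ⟨c, rfl⟩ | hb <;> rcases em (b' ∈ range iB) with ⟨c', rfl⟩ | hb'
  · rw [rightFun_apply_iB, rightFun_apply_iB, OrderEmbedding.le_iff_le, iA.le_iff_le, iB.le_iff_le]
  · rw [rightFun_apply_iB, rightFun_of_notMem hb']
    exact mixedLE_apply_left_iff c b'
  · rw [rightFun_apply_iB, rightFun_of_notMem hb]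
    have hne : b ≠ iB c' := fun h => hb ⟨c', h.symm⟩
    exact (not_congr (mixedLE_apply_left_iff c' b)).trans (not_le.trans hne.le_iff_lt.symm)
  · rw [rightFun_of_notMem hb, rightFun_of_notMem hb']
    exact Iff.rfl

variable (iA iB z) in
noncomputable def right : β ↪o Amalgam iA iB z :=
  OrderEmbedding.ofMapLEIff (rightFun iA iB z) rightFun_le_rightFun_iff

theorem right_apply_iB (c : γ) : right iA iB z (iB c) = left iA iB z (iA c) :=
  rightFun_apply_iB c

theorem range_left_inter_range_right :
    range (left iA iB z) ∩ range (right iA iB z) = range fun c => left iA iB z (iA c) := by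
  ext x
  constructor
  · rintro ⟨⟨a, rfl⟩, b, hb⟩
    by_cases hbB : b ∈ range iB
    · obtain ⟨c, rfl⟩ := hbB
      exact ⟨c, (right_apply_iB c).symm.trans hb⟩
    · exact absurd ((rightFun_of_notMem hbB).symm.trans hb) Sum.inr_ne_inl
  · rintro ⟨c, rfl⟩
    exact ⟨mem_range_self _, iB c, right_apply_iB c⟩

def map (σ : α → α) (τ : β → β) (hτ : ∀ b, τ b ∈ range iB ↔ b ∈ range iB) :
    Amalgam iA iB z → Amalgam iA iB z :=
  Sum.map σ (Subtype.map τ fun b => mt (hτ b).1)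

variable {σ : α → α} {τ : β → β} {hτB : ∀ b, τ b ∈ range iB ↔ b ∈ range iB}

theorem map_bijective (hσ : Bijective σ) (hτ : Bijective τ) :
    Bijective (map (iA := iA) (z := z) σ τ hτB) := by
  refine hσ.sumMap ⟨Subtype.map_injective _ hτ.1, fun ⟨b, hb⟩ => ?_⟩
  obtain ⟨b, rfl⟩ := hτ.2 b
  exact ⟨⟨b, mt (hτB b).2 hb⟩, rfl⟩

theorem le_iff_map_le_map {ρ : γ → γ} (hρ : Surjective ρ)
    (hσ : ∀ a a', a ≤ a' ↔ σ a ≤ σ a') (hτ : ∀ b b', b ≤ b' ↔ τ b ≤ τ b')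
    (hA : ∀ c, iA (ρ c) = σ (iA c)) (hB : ∀ c, iB (ρ c) = τ (iB c)) (hz : ρ z = z)
    (x y : Amalgam iA iB z) : x ≤ y ↔ map σ τ hτB x ≤ map σ τ hτB y :=
  Glued.le_iff_map_le_map (τ := Subtype.map τ fun b => mt (hτB b).1) hσ (fun b b' => hτ b b')
    (fun a (b : {b // b ∉ range iB}) => mixedLE_map_iff hρ hσ hτ hA hB hz a b.1) x y

theorem le_iff_map_le_map_of_anti {ρ : γ → γ} (hρ : Surjective ρ)
    (hσ : ∀ a a', a ≤ a' ↔ σ a' ≤ σ a) (hτ : ∀ b b', b ≤ b' ↔ τ b' ≤ τ b)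
    (hA : ∀ c, iA (ρ c) = σ (iA c)) (hB : ∀ c, iB (ρ c) = τ (iB c)) (hz : ρ z = z)
    (x y : Amalgam iA iB z) : x ≤ y ↔ map σ τ hτB y ≤ map σ τ hτB x :=
  Glued.le_iff_map_le_map_of_anti (τ := Subtype.map τ fun b => mt (hτB b).1) hσ
    (fun b b' => hτ b b')
    (fun a (b : {b // b ∉ range iB}) => mixedLE_map_iff_not_of_anti hρ hσ hτ hA hB hz a b.2) x y

theorem right_map {ρ : γ → γ} (hA : ∀ c, iA (ρ c) = σ (iA c)) (hB : ∀ c, iB (ρ c) = τ (iB c))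
    (b : β) : right iA iB z (τ b) = map σ τ hτB (right iA iB z b) := by
  by_cases hb : b ∈ range iB
  · obtain ⟨c, rfl⟩ := hb
    rw [← hB, right_apply_iB, right_apply_iB, hA]
    rfl
  · have hτb : τ b ∉ range iB := mt (hτB b).1 hb
    exact (rightFun_of_notMem hτb).trans (congrArg (map σ τ hτB) (rightFun_of_notMem hb)).symm

end Amalgam

end

namespace LinOrderAutAntiCenter

variable {F G : Type}

structure IsHom {X Y : LinOrderAutAntiCenter F G} (i : X.carrier ↪o Y.carrier) : Prop where
  map_f : ∀ k x, i (X.f k x) = Y.f k (i x)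
  map_g : ∀ k x, i (X.g k x) = Y.g k (i x)

variable {A B C : LinOrderAutAntiCenter F G} {iA : C.carrier ↪o A.carrier}
  {iB : C.carrier ↪o B.carrier}

theorem IsHom.f_mem_range_iff (hB : IsHom iB) (k : F) (b : B.carrier) :
    B.f k b ∈ range iB ↔ b ∈ range iB :=
  apply_mem_range_iff (C.bijF k).2 (B.bijF k).1 (hB.map_f k) b

theorem IsHom.g_mem_range_iff (hB : IsHom iB) (k : G) (b : B.carrier) :
    B.g k b ∈ range iB ↔ b ∈ range iB :=
  apply_mem_range_iff (C.bijG k).2 (B.bijG k).1 (hB.map_g k) b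

noncomputable def amalgam (hA : IsHom iA) (hB : IsHom iB) : LinOrderAutAntiCenter F G where
  carrier := Amalgam iA iB C.center
  center := Sum.inl A.center
  f k := Amalgam.map (A.f k) (B.f k) (hB.f_mem_range_iff k)
  g k := Amalgam.map (A.g k) (B.g k) (hB.g_mem_range_iff k)
  bijF k := Amalgam.map_bijective (A.bijF k) (B.bijF k)
  ordF k := Amalgam.le_iff_map_le_map (C.bijF k).2 (A.ordF k) (B.ordF k) (hA.map_f k)
    (hB.map_f k) (C.centerF k)
  bijG k := Amalgam.map_bijective (A.bijG k) (B.bijG k)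
  ordG k := Amalgam.le_iff_map_le_map_of_anti (C.bijG k).2 (A.ordG k) (B.ordG k) (hA.map_g k)
    (hB.map_g k) (C.centerG k)
  centerF k := congrArg Sum.inl (A.centerF k)
  centerG k := congrArg Sum.inl (A.centerG k)

variable (hA : IsHom iA) (hB : IsHom iB)

noncomputable def amalgamLeft : A.carrier ↪o (amalgam hA hB).carrier :=
  Amalgam.left iA iB C.center

noncomputable def amalgamRight : B.carrier ↪o (amalgam hA hB).carrier :=
  Amalgam.right iA iB C.center

theorem isHom_amalgamLeft : IsHom (amalgamLeft hA hB) :=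
  ⟨fun _ _ => rfl, fun _ _ => rfl⟩

theorem isHom_amalgamRight : IsHom (amalgamRight hA hB) :=
  ⟨fun k => Amalgam.right_map (hτB := hB.f_mem_range_iff k) (hA.map_f k) (hB.map_f k),
    fun k => Amalgam.right_map (hτB := hB.g_mem_range_iff k) (hA.map_g k) (hB.map_g k)⟩

end LinOrderAutAntiCenter

open LinOrderAutAntiCenter

/-- For every pair of sets `F` and `G`, the class of linearly ordered sets with
an `F`-indexed family of automorphisms and a `G`-indexed family of
antiautomorphisms, all with a common center, has the strong amalgamation
property. -/
theorem linear_orders_auts_antiauts_common_center_strong_amalgamation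
    (F G : Type) (A B C : LinOrderAutAntiCenter F G)
    (iA : C.carrier ↪o A.carrier) (iB : C.carrier ↪o B.carrier)
    (hAf : ∀ i c, iA (C.f i c) = A.f i (iA c))
    (hAg : ∀ j c, iA (C.g j c) = A.g j (iA c))
    (hBf : ∀ i c, iB (C.f i c) = B.f i (iB c))
    (hBg : ∀ j c, iB (C.g j c) = B.g j (iB c)) :
    ∃ (D : LinOrderAutAntiCenter F G) (jA : A.carrier ↪o D.carrier)
      (jB : B.carrier ↪o D.carrier),
      (∀ i a, jA (A.f i a) = D.f i (jA a)) ∧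
      (∀ j a, jA (A.g j a) = D.g j (jA a)) ∧
      (∀ i b, jB (B.f i b) = D.f i (jB b)) ∧
      (∀ j b, jB (B.g j b) = D.g j (jB b)) ∧
      (∀ c, jA (iA c) = jB (iB c)) ∧
      Set.range jA ∩ Set.range jB = Set.range (fun c => jA (iA c)) := by
  have hA : IsHom iA := ⟨hAf, hAg⟩
  have hB : IsHom iB := ⟨hBf, hBg⟩
  obtain ⟨hLf, hLg⟩ := isHom_amalgamLeft hA hB
  obtain ⟨hRf, hRg⟩ := isHom_amalgamRight hA hB
  exact ⟨amalgam hA hB, amalgamLeft hA hB, amalgamRight hA hB, hLf, hLg, hRf, hRg,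
    fun c => (Amalgam.right_apply_iB c).symm, Amalgam.range_left_inter_range_right⟩
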